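/- arXiv:2012.15778 — 2 statements merged into one kernel-verified Lean document; each statement's English description precedes it below -/
import Mathlib

section
/- Let K be a field, n a positive integer, v ∈ K, and u ∈ K with u ≠ 0, uⁿ ≠ 1 and u⁻ⁿ ≠ 1. Let x be an integer with x ≢ 0 (mod n), and let gx, gmx ∈ K satisfy gx·gmx = v. Write a = ⌈x⌉ₙ and note ⌈−x⌉ₙ = n − a. Define the 2×2 matrix S(u) with entries S(u)₁₁ = (1−v)·u^{a−1}/(1−uⁿ), S(u)₁₂ = gx·u⁻¹, S(u)₂₁ = gmx·u⁻¹, S(u)₂₂ = (1−v)·u^{n−a−1}/(1−uⁿ). Then S(u⁻¹)·S(u) = λ·I where λ = (1−v uⁿ)(1−v u⁻ⁿ)/((1−uⁿ)(1−u⁻ⁿ)). -/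
/-!
Writing `w = uⁿ` and `c(u) = (1 - v)/(1 - w)`, the matrix `S(u)` is `u⁻¹` times
`[[c(u) uᵃ, gx], [gmx, c(u) w u⁻ᵃ]]`, and `S(u⁻¹)` has the same shape with `u` inverted.
Since `c(u⁻¹) = -c(u) w`, the off-diagonal entries of the product cancel, and both diagonal
entries equal `c(u⁻¹) c(u) + gx gmx`, which is `λ` by the polynomial identity
`(1 - v)² + v (1 - w)(1 - w⁻¹) = (1 - v w)(1 - v w⁻¹)`.
-/

/-- The `2×2` Kazhdan–Patterson scattering matrix `S(u)` restricted to the span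
indexed by `θ` and `s_iθ`. -/
def scatteringMatrix {K : Type*} [Field K] (v gx gmx : K) (n : ℕ) (a : ℤ) (u : K) :
    Matrix (Fin 2) (Fin 2) K :=
  !![(1 - v) * u ^ (a - 1) / (1 - u ^ (n : ℤ)), gx * u⁻¹;
     gmx * u⁻¹, (1 - v) * u ^ ((n : ℤ) - a - 1) / (1 - u ^ (n : ℤ))]

section

variable {K : Type*} [Field K]

theorem div_one_sub_inv_add_div_one_sub_mul_self (v : K) {w : K} (hw : w ≠ 0) :
    (1 - v) / (1 - w⁻¹) + (1 - v) / (1 - w) * w = 0 := by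
  rcases eq_or_ne w 1 with rfl | hw1
  -- both denominators vanish, and `x / 0 = 0`
  · simp
  have h1 : 1 - w ≠ 0 := sub_ne_zero.2 hw1.symm
  have h3 : 1 - w⁻¹ = (w - 1) / w := by field_simp
  rw [h3]
  field_simp
  ring

theorem div_one_sub_inv_mul_div_one_sub_add (v : K) {w : K} (hw : w ≠ 0) (hw1 : w ≠ 1) :
    (1 - v) / (1 - w⁻¹) * ((1 - v) / (1 - w)) + v =
      (1 - v * w) * (1 - v * w⁻¹) / ((1 - w) * (1 - w⁻¹)) := by
  have h1 : 1 - w ≠ 0 := sub_ne_zero.2 hw1.symm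
  have h2 : 1 - w⁻¹ ≠ 0 := sub_ne_zero.2 (by simpa [eq_comm] using hw1)
  field_simp
  ring

theorem inv_matrix_mul_matrix_eq_smul_one {c c' t w g g' : K} (ht : t ≠ 0) (hw : w ≠ 0)
    (hc : c' + c * w = 0) :
    !![c' * t⁻¹, g; g', c' * w⁻¹ / t⁻¹] * !![c * t, g; g', c * w / t] =
      (c' * c + g * g') • 1 := by
  obtain rfl : c' = -(c * w) := eq_neg_of_add_eq_zero_left hc
  ext i j
  fin_cases i <;> fin_cases j <;> simp [Matrix.mul_apply] <;> field_simp <;> ring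

theorem scatteringMatrix_eq_smul (v gx gmx : K) (n : ℕ) (a : ℤ) {u : K} (hu : u ≠ 0) :
    scatteringMatrix v gx gmx n a u =
      u⁻¹ • !![(1 - v) / (1 - u ^ (n : ℤ)) * u ^ a, gx;
        gmx, (1 - v) / (1 - u ^ (n : ℤ)) * u ^ (n : ℤ) / u ^ a] := by
  ext i j
  fin_cases i <;> fin_cases j <;> simp [scatteringMatrix, zpow_sub₀ hu] <;> ring

end

theorem scattering_unitarity_general (K : Type*) [Field K] (n : ℕ)
    (v u gx gmx : K) (hu : u ≠ 0) (hun : u ^ (n : ℤ) ≠ 1)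
    (hg : gx * gmx = v)
    (a : ℤ) :
    scatteringMatrix v gx gmx n a u⁻¹ * scatteringMatrix v gx gmx n a u =
      ((1 - v * u ^ (n : ℤ)) * (1 - v * u ^ (-(n : ℤ))) /
          ((1 - u ^ (n : ℤ)) * (1 - u ^ (-(n : ℤ))))) •
        (1 : Matrix (Fin 2) (Fin 2) K) := by
  have hw : u ^ (n : ℤ) ≠ 0 := zpow_ne_zero _ hu
  rw [scatteringMatrix_eq_smul v gx gmx n a hu,
    scatteringMatrix_eq_smul v gx gmx n a (inv_ne_zero hu), inv_zpow, inv_zpow, inv_inv,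
    smul_mul_smul_comm, mul_inv_cancel₀ hu, one_smul,
    inv_matrix_mul_matrix_eq_smul_one (zpow_ne_zero _ hu) hw
      (div_one_sub_inv_add_div_one_sub_mul_self v hw),
    hg, zpow_neg, div_one_sub_inv_mul_div_one_sub_add v hw hun]

/-- with `u ≠ 0`, `uⁿ ≠ 1`, `u⁻ⁿ ≠ 1`, `x ≢ 0 (mod n)`,
`gx·gmx = v`, and `a = ⌈x⌉ₙ` (so `⌈-x⌉ₙ = n - a`), the scattering matrices satisfy
the unitarity relation `S(u⁻¹)·S(u) = λ·I` with
`λ = (1 - v uⁿ)(1 - v u⁻ⁿ)/((1 - uⁿ)(1 - u⁻ⁿ))`. -/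
theorem scattering_unitarity (K : Type*) [Field K] (n : ℕ) (hn : 0 < n)
    (v u gx gmx : K) (hu : u ≠ 0) (hun : u ^ (n : ℤ) ≠ 1) (humn : u ^ (-(n : ℤ)) ≠ 1)
    (x : ℤ) (hx : ¬ (n : ℤ) ∣ x) (hg : gx * gmx = v)
    (a : ℤ) (ha0 : 0 < a) (han : a ≤ n) (hamod : a ≡ x [ZMOD (n : ℤ)]) :
    scatteringMatrix v gx gmx n a u⁻¹ * scatteringMatrix v gx gmx n a u =
      ((1 - v * u ^ (n : ℤ)) * (1 - v * u ^ (-(n : ℤ))) /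
          ((1 - u ^ (n : ℤ)) * (1 - u ^ (-(n : ℤ))))) •
        (1 : Matrix (Fin 2) (Fin 2) K) :=
  scattering_unitarity_general K n v u gx gmx hu hun hg a
end

section
/- Let K be a field, v ∈ K a nonzero element, n a positive integer, and let F = K(X) be the field of rational functions with the K-algebra involution σ determined by σ(X) = X⁻¹. Fix an integer x with 0 ≤ x < n and elements gx, gmx ∈ K with gx·gmx = v if x ≠ 0, and gx = gmx = −v if x = 0. Let a = ⌈x⌉ₙ and a' = ⌈−x⌉ₙ (least strictly positive residues mod n). Define the K-linear operator T on F² by (T f)₁ = [(1−v)(X^{a−1}σ(f₁) − f₁) + gx·X⁻¹(1−Xⁿ)σ(f₂)]/(1−Xⁿ) and (T f)₂ = [(1−v)(X^{a'−1}σ(f₂) − f₂) + gmx·X⁻¹(1−Xⁿ)σ(f₁)]/(1−Xⁿ) when x ≠ 0, and in the case x = 0 by the single-component operator (T f) = [(1−v)(X^{n−1}σ(f) − f) + g(0)·X⁻¹(1−Xⁿ)σ(f)]/(1−Xⁿ) on F. Then T satisfies the quadratic Hecke relation (T − v)(T + 1) = 0. -/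
/-!
Write `a = p + 1` and `D = 1 - Xⁿ`. Since `σ D = -X⁻ⁿ D`, the function `σ (T f)` again has
denominator `D`, with numerator `(1 - v)(Xⁿ σf₁ - X^(n-p) f₁) + g X D f₂`. Substituting this
into `T (T f)` and clearing `D²` turns the Hecke relation into a polynomial identity in `X`,
`X⁻¹`, the `fᵢ` and the `σ fᵢ`, which holds once `a + a' = n` and `g g' = v` (for `x ≠ 0`),
resp. `a = n` and `g = -v` (for `x = 0`). These conditions on `a, a'` follow from the
congruences because `⌈x⌉ₙ` and `⌈-x⌉ₙ` are `x` and `n - x`, resp. both `n`.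
-/

open RatFunc

/-- One component of the rank-one vector metaplectic Demazure–Whittaker operator:
`f, f'` are the two components of the vector; the parameters are `v`, the Gauss sum
`gx`, the exponent `a = ⌈x⌉ₙ`, the degree `n` of the cover, and the involution `σ`
with `σ(X) = X⁻¹`. -/
noncomputable def DWcomp {K : Type*} [Field K] (v gx : K) (a : ℤ) (n : ℕ)
    (σ : RatFunc K →ₐ[K] RatFunc K) (f f' : RatFunc K) : RatFunc K :=
  ((1 - RatFunc.C v) * ((RatFunc.X : RatFunc K) ^ (a - 1) * σ f - f) +
      RatFunc.C gx * (RatFunc.X : RatFunc K)⁻¹ *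
        (1 - (RatFunc.X : RatFunc K) ^ (n : ℤ)) * σ f') /
    (1 - (RatFunc.X : RatFunc K) ^ (n : ℤ))

theorem Int.ModEq.eq_of_abs_sub_lt {n a b : ℤ} (h : a ≡ b [ZMOD n]) (hab : |b - a| < n) :
    a = b :=
  (sub_eq_zero.mp (Int.eq_zero_of_abs_lt_dvd h.dvd hab)).symm

theorem RatFunc.one_sub_X_pow_ne_zero {K : Type*} [Field K] {n : ℕ} (hn : 0 < n) :
    (1 : RatFunc K) - X ^ n ≠ 0 := by
  have h := algebraMap_ne_zero (Polynomial.X_pow_sub_C_ne_zero hn (1 : K))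
  rw [map_sub, map_pow, algebraMap_X, Polynomial.C_1, map_one] at h
  rw [← neg_sub]
  exact neg_ne_zero.mpr h

section

variable {K : Type*} [Field K]

theorem DWcomp_natCast_add_one (v g : K) (p n : ℕ) (σ : RatFunc K →ₐ[K] RatFunc K)
    (f f' : RatFunc K) :
    DWcomp v g (p + 1) n σ f f' =
      ((1 - C v) * (X ^ p * σ f - f) + C g * X⁻¹ * (1 - X ^ n) * σ f') / (1 - X ^ n) := by
  simp only [DWcomp, add_sub_cancel_right, zpow_natCast]

variable {σ : RatFunc K →ₐ[K] RatFunc K} (hσX : σ X = X⁻¹) (hσσ : ∀ f, σ (σ f) = f)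
include hσX hσσ

theorem map_DWcomp (v g : K) {p r n : ℕ} (hpr : p + r = n) (hr : 0 < r) (f f' : RatFunc K) :
    σ (DWcomp v g (p + 1) n σ f f') =
      ((1 - C v) * (X ^ n * σ f - X ^ r * f) + C g * X * (1 - X ^ n) * f') / (1 - X ^ n) := by
  subst hpr
  have hσC (c : K) : σ (C c) = C c := by rw [← algebraMap_eq_C]; exact σ.commutes c
  have hX : (X : RatFunc K) ≠ 0 := X_ne_zero
  have hD : (1 : RatFunc K) - X ^ (p + r) ≠ 0 := one_sub_X_pow_ne_zero (by omega)
  have hD' : (X : RatFunc K) ^ (p + r) - 1 ≠ 0 := by rw [← neg_sub]; exact neg_ne_zero.mpr hD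
  rw [DWcomp_natCast_add_one]
  simp only [map_div₀, map_add, map_mul, map_sub, map_one, map_pow, map_inv₀, hσX, hσC, hσσ,
    inv_inv, inv_pow]
  field_simp
  ring

theorem DWcomp_hecke_pair (g g' : K) {a a' : ℤ} {n : ℕ} (ha : 0 < a) (ha' : 0 < a')
    (hn : a + a' = n) (f₁ f₂ : RatFunc K) :
    DWcomp (g * g') g a n σ (DWcomp (g * g') g a n σ f₁ f₂) (DWcomp (g * g') g' a' n σ f₂ f₁) +
        DWcomp (g * g') g a n σ f₁ f₂ -
        C (g * g') * DWcomp (g * g') g a n σ f₁ f₂ - C (g * g') * f₁ = 0 := by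
  obtain ⟨p, rfl⟩ : ∃ p : ℕ, a = p + 1 := ⟨(a - 1).toNat, by omega⟩
  obtain ⟨q, rfl⟩ : ∃ q : ℕ, a' = q + 1 := ⟨(a' - 1).toNat, by omega⟩
  obtain rfl : n = p + q + 2 := by omega
  have hD : (1 : RatFunc K) - X ^ (p + q + 2) ≠ 0 := one_sub_X_pow_ne_zero (by omega)
  have hX : (X : RatFunc K) ≠ 0 := X_ne_zero
  rw [DWcomp_natCast_add_one, map_DWcomp hσX hσσ _ _ (r := q + 2) (by ring) (by omega),
    map_DWcomp hσX hσσ _ _ (r := p + 2) (by ring) (by omega), DWcomp_natCast_add_one, map_mul]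
  field_simp
  ring

theorem DWcomp_hecke_self (v : K) {a : ℤ} {n : ℕ} (ha : 0 < a) (hn : a = n) (f : RatFunc K) :
    DWcomp v (-v) a n σ (DWcomp v (-v) a n σ f f) (DWcomp v (-v) a n σ f f) +
        DWcomp v (-v) a n σ f f -
        C v * DWcomp v (-v) a n σ f f - C v * f = 0 := by
  obtain ⟨m, rfl⟩ : ∃ m : ℕ, n = m + 1 := ⟨n - 1, by omega⟩
  subst hn
  have hD : (1 : RatFunc K) - X ^ (m + 1) ≠ 0 := one_sub_X_pow_ne_zero (by omega)
  have hX : (X : RatFunc K) ≠ 0 := X_ne_zero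
  rw [Nat.cast_succ, DWcomp_natCast_add_one, map_DWcomp hσX hσσ _ _ (r := 1) rfl one_pos,
    DWcomp_natCast_add_one, map_neg]
  field_simp
  ring

end

theorem DW_hecke_relation_general (K : Type*) [Field K] (v : K) (n : ℕ)
    (σ : RatFunc K →ₐ[K] RatFunc K)
    (hσX : σ (RatFunc.X : RatFunc K) = (RatFunc.X : RatFunc K)⁻¹)
    (hσinv : ∀ f : RatFunc K, σ (σ f) = f)
    (x : ℤ) (hx0 : 0 ≤ x) (hxn : x < n)
    (gx gmx : K) (hg : x ≠ 0 → gx * gmx = v) (hg0 : x = 0 → gx = -v ∧ gmx = -v)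
    (a a' : ℤ) (ha0 : 0 < a) (han : a ≤ n) (hamod : a ≡ x [ZMOD (n : ℤ)])
    (ha'0 : 0 < a') (ha'n : a' ≤ n) (ha'mod : a' ≡ -x [ZMOD (n : ℤ)]) :
    (x ≠ 0 → ∀ f₁ f₂ : RatFunc K,
      DWcomp v gx a n σ (DWcomp v gx a n σ f₁ f₂) (DWcomp v gmx a' n σ f₂ f₁) +
          DWcomp v gx a n σ f₁ f₂ -
          RatFunc.C v * DWcomp v gx a n σ f₁ f₂ - RatFunc.C v * f₁ = 0 ∧
      DWcomp v gmx a' n σ (DWcomp v gmx a' n σ f₂ f₁) (DWcomp v gx a n σ f₁ f₂) +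
          DWcomp v gmx a' n σ f₂ f₁ -
          RatFunc.C v * DWcomp v gmx a' n σ f₂ f₁ - RatFunc.C v * f₂ = 0) ∧
    (x = 0 → ∀ f : RatFunc K,
      DWcomp v gx a n σ (DWcomp v gx a n σ f f) (DWcomp v gx a n σ f f) +
          DWcomp v gx a n σ f f -
          RatFunc.C v * DWcomp v gx a n σ f f - RatFunc.C v * f = 0) := by
  refine ⟨fun hx f₁ f₂ => ?_, fun hx f => ?_⟩
  · have hax : a = x := hamod.eq_of_abs_sub_lt (by rw [abs_lt]; omega)
    have ha'x : a' = n - x :=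
      (ha'mod.trans (Int.modEq_iff_dvd.mpr ⟨1, by ring⟩)).eq_of_abs_sub_lt
        (by rw [abs_lt]; omega)
    rw [← hg hx]
    exact ⟨DWcomp_hecke_pair hσX hσinv gx gmx ha0 ha'0 (by omega) f₁ f₂,
      mul_comm gmx gx ▸ DWcomp_hecke_pair hσX hσinv gmx gx ha'0 ha0 (by omega) f₂ f₁⟩
  · subst hx
    obtain ⟨rfl, -⟩ := hg0 rfl
    have han' : a = n :=
      (hamod.trans (Int.modEq_iff_dvd.mpr ⟨1, by ring⟩)).eq_of_abs_sub_lt (by rw [abs_lt]; omega)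
    exact DWcomp_hecke_self hσX hσinv v ha0 han' f

/-- the rank-one vector metaplectic Demazure–Whittaker operator
satisfies the quadratic Hecke relation `(T - v)(T + 1) = 0`, i.e.
`T²f + Tf - v·Tf - v·f = 0` componentwise; in the case `x ≠ 0` the operator acts on
pairs `(f₁, f₂)` with parameters `(gx, a)` and `(gmx, a')`, and in the case `x = 0`
it acts on a single function with parameters `(gx, a)` where `a = n` and `gx = -v`. -/
theorem DW_hecke_relation (K : Type*) [Field K] (v : K) (hv : v ≠ 0) (n : ℕ)
    (hn : 0 < n) (σ : RatFunc K →ₐ[K] RatFunc K)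
    (hσX : σ (RatFunc.X : RatFunc K) = (RatFunc.X : RatFunc K)⁻¹)
    (hσinv : ∀ f : RatFunc K, σ (σ f) = f)
    (x : ℤ) (hx0 : 0 ≤ x) (hxn : x < n)
    (gx gmx : K) (hg : x ≠ 0 → gx * gmx = v) (hg0 : x = 0 → gx = -v ∧ gmx = -v)
    (a a' : ℤ) (ha0 : 0 < a) (han : a ≤ n) (hamod : a ≡ x [ZMOD (n : ℤ)])
    (ha'0 : 0 < a') (ha'n : a' ≤ n) (ha'mod : a' ≡ -x [ZMOD (n : ℤ)]) :
    (x ≠ 0 → ∀ f₁ f₂ : RatFunc K,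
      DWcomp v gx a n σ (DWcomp v gx a n σ f₁ f₂) (DWcomp v gmx a' n σ f₂ f₁) +
          DWcomp v gx a n σ f₁ f₂ -
          RatFunc.C v * DWcomp v gx a n σ f₁ f₂ - RatFunc.C v * f₁ = 0 ∧
      DWcomp v gmx a' n σ (DWcomp v gmx a' n σ f₂ f₁) (DWcomp v gx a n σ f₁ f₂) +
          DWcomp v gmx a' n σ f₂ f₁ -
          RatFunc.C v * DWcomp v gmx a' n σ f₂ f₁ - RatFunc.C v * f₂ = 0) ∧
    (x = 0 → ∀ f : RatFunc K,
      DWcomp v gx a n σ (DWcomp v gx a n σ f f) (DWcomp v gx a n σ f f) +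
          DWcomp v gx a n σ f f -
          RatFunc.C v * DWcomp v gx a n σ f f - RatFunc.C v * f = 0) :=
  DW_hecke_relation_general K v n σ hσX hσinv x hx0 hxn gx gmx hg hg0 a a' ha0 han hamod ha'0 ha'n
    ha'mod
end
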